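/- arXiv:2202.05019 — 9 statements merged into one kernel-verified Lean document; each statement's English description precedes it below -/
import Mathlib

section
/- Let H : [0,1] → ℝ be given by H(0) = 0 and H(x) = x·log(1/x) for x ∈ (0,1]. Then lim_{r→∞} ( sup { limsup_{m→∞} (Σ_{n=1}^m H(a_n)) / (Σ_{n=1}^m n·a_n) : (a_n) ∈ 𝔸_r } ) = 0; that is, for every ε > 0 there exists r₀ ≥ 1 such that for every r ≥ r₀ and every sequence (a_n) ∈ 𝔸_r one has limsup_{m→∞} (Σ_{n=1}^m H(a_n)) / (Σ_{n=1}^m n·a_n) ≤ ε. -/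
/-!
The entropy function obeys the Young-type inequality `H x ≤ t x + e^{-t-1}` (the Legendre
dual of `x ↦ -x log x`). Applying it to `a n` with `t = c n` gives
`∑ H (a n) ≤ c ∑ n a n + ∑ e^{-c n} ≤ c ∑ n a n + K_c` with `K_c = e^{-c} / (1 - e^{-c})`,
so the ratio in question is at most `c + K_c / ∑ n a n`. For `a ∈ 𝔸_r` the partial sums of
`n a n` eventually exceed `r / 2`, so the limsup is at most `c + 2 K_c / r`, which is below `ε`
for `c = ε / 2` and `r` large.
-/

open Filter

/-- `H : [0,1] → ℝ`, `H 0 = 0` and `H x = x * log (1/x)` for `x ∈ (0,1]`. -/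
noncomputable def Hfun (x : ℝ) : ℝ := if x = 0 then 0 else x * Real.log (1 / x)

/-- `(a_n)_{n≥1} ∈ 𝔸_r`: nonnegative terms, `∑_{n≥1} a_n ≤ 1` and
`r ≤ ∑_{n≥1} n · a_n` (the latter series, taken in `ℝ≥0∞`, may be infinite). -/
def memA (r : ℝ) (a : ℕ → ℝ) : Prop :=
  (∀ n : ℕ, 1 ≤ n → 0 ≤ a n) ∧
  (∀ m : ℕ, ∑ n ∈ Finset.Icc 1 m, a n ≤ 1) ∧
  ENNReal.ofReal r ≤ ∑' n : ℕ, ENNReal.ofReal ((n : ℝ) * a n)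

open Finset Real

lemma Hfun_nonneg {x : ℝ} (h0 : 0 ≤ x) (h1 : x ≤ 1) : 0 ≤ Hfun x := by
  unfold Hfun
  split_ifs
  · exact le_rfl
  · exact mul_nonneg h0 (log_nonneg (one_le_one_div (by positivity) h1))

lemma Hfun_le_mul_add_exp {x : ℝ} (hx : 0 ≤ x) (t : ℝ) : Hfun x ≤ t * x + exp (-t - 1) := by
  unfold Hfun
  split_ifs with h
  · simpa [h] using (exp_pos _).le
  · have hx' : 0 < x := lt_of_le_of_ne hx (Ne.symm h)
    have hlog := log_le_sub_one_of_pos (div_pos (exp_pos (-t - 1)) hx')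
    rw [log_div (exp_pos _).ne' hx'.ne', log_exp] at hlog
    rw [le_sub_iff_add_le, le_div_iff₀ hx'] at hlog
    rw [one_div, log_inv]
    linarith

lemma sum_Icc_one_pow_le {q : ℝ} (hq0 : 0 ≤ q) (hq1 : q < 1) (m : ℕ) :
    ∑ n ∈ Icc 1 m, q ^ n ≤ q / (1 - q) := by
  rw [← Ico_add_one_right_eq_Icc]
  simpa using geom_sum_Ico_le_of_lt_one (m := 1) hq0 hq1

lemma sum_Hfun_le {a : ℕ → ℝ} {m : ℕ} (ha : ∀ n ∈ Icc 1 m, 0 ≤ a n) {c : ℝ} (hc : 0 < c) :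
    ∑ n ∈ Icc 1 m, Hfun (a n) ≤
      c * ∑ n ∈ Icc 1 m, (n : ℝ) * a n + exp (-c) / (1 - exp (-c)) := by
  have hexp : ∀ n : ℕ, exp (-(c * n) - 1) ≤ exp (-c) ^ n := fun n => by
    rw [← exp_nat_mul, exp_le_exp]
    linarith
  calc ∑ n ∈ Icc 1 m, Hfun (a n)
      ≤ ∑ n ∈ Icc 1 m, (c * n * a n + exp (-c) ^ n) :=
        sum_le_sum fun n hn => (Hfun_le_mul_add_exp (ha n hn) (c * n)).trans (by linarith [hexp n])
    _ = c * ∑ n ∈ Icc 1 m, (n : ℝ) * a n + ∑ n ∈ Icc 1 m, exp (-c) ^ n := by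
        rw [sum_add_distrib, mul_sum]
        simp only [mul_assoc]
    _ ≤ _ := by
        gcongr
        exact sum_Icc_one_pow_le (exp_pos _).le (exp_lt_one_iff.2 (neg_lt_zero.2 hc)) m

lemma eventually_lt_sum_Icc_of_lt_tsum {f : ℕ → ℝ} (hf : ∀ n, 0 ≤ f n) (hf0 : f 0 = 0)
    {s : ℝ} (hs : ENNReal.ofReal s < ∑' n, ENNReal.ofReal (f n)) :
    ∀ᶠ m in atTop, s < ∑ n ∈ Icc 1 m, f n := by
  filter_upwards [(ENNReal.tendsto_nat_tsum _).eventually_const_lt hs] with m hm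
  rw [← ENNReal.ofReal_sum_of_nonneg fun n _ => hf n, ENNReal.ofReal_lt_ofReal_iff'] at hm
  calc s < ∑ n ∈ range m, f n := hm.1
    _ ≤ ∑ n ∈ range (m + 1), f n := sum_le_sum_of_subset_of_nonneg
        (range_subset_range.2 m.le_succ) fun n _ _ => hf n
    _ = ∑ n ∈ Icc 1 m, f n := by
        rw [Nat.range_succ_eq_Icc_zero, ← insert_Icc_add_one_left_eq_Icc m.zero_le,
          sum_insert (by simp), hf0, zero_add, zero_add]

namespace memA

variable {r : ℝ} {a : ℕ → ℝ}

lemma nonneg (ha : memA r a) {n : ℕ} (hn : 1 ≤ n) : 0 ≤ a n := ha.1 n hn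

lemma le_one (ha : memA r a) {n : ℕ} (hn : 1 ≤ n) : a n ≤ 1 :=
  calc a n ≤ ∑ k ∈ Icc 1 n, a k :=
        single_le_sum (fun _ hk => ha.nonneg (mem_Icc.1 hk).1) (mem_Icc.2 ⟨hn, le_rfl⟩)
    _ ≤ 1 := ha.2.1 n

lemma mul_nonneg (ha : memA r a) (n : ℕ) : 0 ≤ (n : ℝ) * a n := by
  rcases n.eq_zero_or_pos with rfl | hn
  · simp
  · exact _root_.mul_nonneg n.cast_nonneg (ha.nonneg hn)

lemma eventually_lt_sum (ha : memA r a) {s : ℝ} (hs : 0 ≤ s) (hsr : s < r) :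
    ∀ᶠ m : ℕ in atTop, s < ∑ n ∈ Icc 1 m, (n : ℝ) * a n :=
  eventually_lt_sum_Icc_of_lt_tsum ha.mul_nonneg (by simp)
    (((ENNReal.ofReal_lt_ofReal_iff_of_nonneg hs).2 hsr).trans_le ha.2.2)

lemma sum_Hfun_div_nonneg (ha : memA r a) (m : ℕ) :
    0 ≤ (∑ n ∈ Icc 1 m, Hfun (a n)) / (∑ n ∈ Icc 1 m, (n : ℝ) * a n) :=
  div_nonneg
    (sum_nonneg fun _ hn => Hfun_nonneg (ha.nonneg (mem_Icc.1 hn).1) (ha.le_one (mem_Icc.1 hn).1))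
    (sum_nonneg fun n _ => ha.mul_nonneg n)

lemma eventually_sum_Hfun_div_le (ha : memA r a) (hr : 0 < r) {c : ℝ} (hc : 0 < c) :
    ∀ᶠ m : ℕ in atTop, (∑ n ∈ Icc 1 m, Hfun (a n)) / (∑ n ∈ Icc 1 m, (n : ℝ) * a n) ≤
      c + 2 * (exp (-c) / (1 - exp (-c))) / r := by
  have hK : 0 ≤ exp (-c) / (1 - exp (-c)) :=
    div_nonneg (exp_pos _).le (sub_nonneg.2 (exp_le_one_iff.2 (by linarith)))
  filter_upwards [ha.eventually_lt_sum (s := r / 2) (by linarith) (by linarith)] with m hm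
  set D := ∑ n ∈ Icc 1 m, (n : ℝ) * a n
  have hD : 0 < D := by linarith
  calc (∑ n ∈ Icc 1 m, Hfun (a n)) / D
      ≤ (c * D + exp (-c) / (1 - exp (-c))) / D :=
        div_le_div_of_nonneg_right (sum_Hfun_le (fun n hn => ha.nonneg (mem_Icc.1 hn).1) hc) hD.le
    _ = c + exp (-c) / (1 - exp (-c)) / D := by field_simp
    _ ≤ c + exp (-c) / (1 - exp (-c)) / (r / 2) := by gcongr
    _ = c + 2 * (exp (-c) / (1 - exp (-c))) / r := by ring

end memA

theorem stmt0 (ε : ℝ) (hε : 0 < ε) :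
    ∃ r₀ : ℝ, 1 ≤ r₀ ∧ ∀ r : ℝ, r₀ ≤ r → ∀ a : ℕ → ℝ, memA r a →
      Filter.limsup (fun m : ℕ =>
          (∑ n ∈ Finset.Icc 1 m, Hfun (a n)) / (∑ n ∈ Finset.Icc 1 m, (n : ℝ) * a n))
        Filter.atTop ≤ ε := by
  set K := exp (-(ε / 2)) / (1 - exp (-(ε / 2)))
  refine ⟨max 1 (4 * K / ε), le_max_left _ _, ?_⟩
  intro r hr a ha
  have hr1 : 1 ≤ r := (le_max_left _ _).trans hr
  have hKr : 2 * K / r ≤ ε / 2 := by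
    have := (le_max_right _ _).trans hr
    rw [div_le_iff₀ hε] at this
    rw [div_le_iff₀ (by linarith)]
    linarith
  refine limsup_le_of_le (isCoboundedUnder_le_of_le atTop ha.sum_Hfun_div_nonneg) ?_
  filter_upwards [ha.eventually_sum_Hfun_div_le (by linarith) (half_pos hε)] with m hm
  linarith
end

section
/- lim_{r→∞} ( sup { limsup_{m→∞} (Σ_{n=1}^m log(n)·a_n) / (Σ_{n=1}^m n·a_n) : (a_n) ∈ 𝔸_r } ) = 0; that is, for every ε > 0 there exists r₀ ≥ 1 such that for every r ≥ r₀ and every sequence (a_n) ∈ 𝔸_r one has limsup_{m→∞} (Σ_{n=1}^m log(n)·a_n) / (Σ_{n=1}^m n·a_n) ≤ ε. -/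
/-! From `log y ≤ y - 1` applied to `δ n` and to `δ⁻¹` one gets `log n ≤ δ n + δ⁻¹`. Since
`∑ a_n ≤ 1`, the numerator is then at most `δ S_m + δ⁻¹`, where `S_m = ∑_{n ≤ m} n a_n`, and
`S_m` eventually exceeds `r - 1`; once `r - 1 ≥ δ⁻²` this gives `δ⁻¹ ≤ δ S_m`, so the quotient is
eventually at most `2δ`. Take `δ = ε / 2`. -/

open Filter

open Topology Finset

theorem HasSum.tendsto_sum_Icc_one {M : Type*} [AddCommMonoid M] [TopologicalSpace M]
    {f : ℕ → M} {s : M} (hf : HasSum f s) (h0 : f 0 = 0) :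
    Tendsto (fun m ↦ ∑ n ∈ Icc 1 m, f n) atTop (𝓝 s) := by
  refine (hf.tendsto_sum_nat.comp (tendsto_add_atTop_nat 1)).congr fun m ↦ ?_
  rw [Function.comp_apply, Nat.range_succ_eq_Icc_zero,
    ← add_sum_Ioc_eq_sum_Icc m.zero_le, h0, _root_.zero_add]
  rfl

theorem Real.log_le_mul_add_inv {x δ : ℝ} (hx : 0 < x) (hδ : 0 < δ) :
    Real.log x ≤ δ * x + δ⁻¹ := by
  have h₁ := Real.log_le_sub_one_of_pos (mul_pos hδ hx)
  have h₂ := Real.log_le_sub_one_of_pos (inv_pos.mpr hδ)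
  rw [Real.log_mul hδ.ne' hx.ne'] at h₁
  rw [Real.log_inv] at h₂
  linarith

theorem Finset.sum_log_mul_le {ι : Type*} (s : Finset ι) {x a : ι → ℝ} {δ : ℝ} (hδ : 0 < δ)
    (hx : ∀ i ∈ s, 0 < x i) (ha : ∀ i ∈ s, 0 ≤ a i) (ha₁ : ∑ i ∈ s, a i ≤ 1) :
    ∑ i ∈ s, Real.log (x i) * a i ≤ δ * ∑ i ∈ s, x i * a i + δ⁻¹ :=
  calc ∑ i ∈ s, Real.log (x i) * a i
      ≤ ∑ i ∈ s, (δ * x i + δ⁻¹) * a i :=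
        sum_le_sum fun i hi ↦ mul_le_mul_of_nonneg_right
          (Real.log_le_mul_add_inv (hx i hi) hδ) (ha i hi)
    _ = δ * ∑ i ∈ s, x i * a i + δ⁻¹ * ∑ i ∈ s, a i := by
        simp only [add_mul, sum_add_distrib, mul_sum, mul_assoc]
    _ ≤ δ * ∑ i ∈ s, x i * a i + δ⁻¹ := by
        gcongr
        exact mul_le_of_le_one_right (inv_nonneg.mpr hδ.le) ha₁

theorem Finset.sum_log_mul_div_le {ι : Type*} (s : Finset ι) {x a : ι → ℝ} {δ : ℝ} (hδ : 0 < δ)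
    (hx : ∀ i ∈ s, 0 < x i) (ha : ∀ i ∈ s, 0 ≤ a i) (ha₁ : ∑ i ∈ s, a i ≤ 1)
    (hlarge : δ⁻¹ ^ 2 ≤ ∑ i ∈ s, x i * a i) :
    (∑ i ∈ s, Real.log (x i) * a i) / ∑ i ∈ s, x i * a i ≤ 2 * δ := by
  set S := ∑ i ∈ s, x i * a i
  have hS : 0 < S := lt_of_lt_of_le (by positivity) hlarge
  have hinv : δ⁻¹ ≤ δ * S := by
    calc δ⁻¹ = δ * δ⁻¹ ^ 2 := by field_simp
      _ ≤ δ * S := by gcongr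
  rw [div_le_iff₀ hS]
  linarith [s.sum_log_mul_le hδ hx ha ha₁]

theorem stmt1 (ε : ℝ) (hε : 0 < ε) :
    ∃ r₀ : ℝ, 1 ≤ r₀ ∧ ∀ r : ℝ, r₀ ≤ r → ∀ a : ℕ → ℝ, memA r a →
      Filter.limsup (fun m : ℕ =>
          (∑ n ∈ Finset.Icc 1 m, Real.log n * a n) /
            (∑ n ∈ Finset.Icc 1 m, (n : ℝ) * a n))
        Filter.atTop ≤ ε := by
  refine ⟨1 + (ε / 2)⁻¹ ^ 2, by linarith [sq_nonneg (ε / 2)⁻¹], ?_⟩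
  rintro r hr a ⟨ha, ha₁, hr_le⟩
  have ha' : ∀ m : ℕ, ∀ n ∈ Icc 1 m, 0 ≤ a n := fun m n hn ↦ ha n (mem_Icc.mp hn).1
  have hlarge : ∀ᶠ m : ℕ in atTop, r - 1 < ∑ n ∈ Icc 1 m, (n : ℝ) * a n := by
    have hlim := ENNReal.summable.hasSum.tendsto_sum_Icc_one
      (f := fun n ↦ ENNReal.ofReal (n * a n)) (by simp)
    have hr₁ : ENNReal.ofReal (r - 1) < ∑' n : ℕ, ENNReal.ofReal (n * a n) :=
      ((ENNReal.ofReal_lt_ofReal_iff (by nlinarith)).mpr (by linarith)).trans_le hr_le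
    filter_upwards [hlim.eventually_const_lt hr₁] with m hm
    rw [← ENNReal.ofReal_sum_of_nonneg fun n hn ↦ mul_nonneg n.cast_nonneg (ha' m n hn),
      ENNReal.ofReal_lt_ofReal_iff'] at hm
    exact hm.1
  refine limsup_le_of_le (isCoboundedUnder_le_of_le atTop (x := 0) fun m ↦ ?_) ?_
  · exact div_nonneg
      (sum_nonneg fun n hn ↦ mul_nonneg (Real.log_natCast_nonneg n) (ha' m n hn))
      (sum_nonneg fun n hn ↦ mul_nonneg n.cast_nonneg (ha' m n hn))
  · filter_upwards [hlarge] with m hm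
    have hn : ∀ n ∈ Icc 1 m, (0 : ℝ) < n := fun n hn ↦ by
      exact_mod_cast (mem_Icc.mp hn).1
    have := (Icc 1 m).sum_log_mul_div_le (half_pos hε) hn (ha' m) (ha₁ m) (by linarith)
    rwa [mul_div_cancel₀ ε two_ne_zero] at this
end

section
/- For every sequence (a_n)_{n≥1} of nonnegative real numbers with Σ_{n≥1} a_n ≤ 1 and every m ≥ 1, one has Σ_{n=1}^m H(a_n) ≤ 9·Σ_{n=1}^m log(n)·a_n + 40. -/
/-!
Since `H = negMulLog` and `H(x) = 2√x · H(√x) ≤ 2√x`, the entropy of a small term `x ≤ n⁻⁴` is at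
most `2 / n²`, while a larger term satisfies `log (1/x) ≤ 4 log n`. Hence
`H(aₙ) ≤ 4 log n · aₙ + 2 / n²` for every `n ≥ 1`, and `∑ 1/n² ≤ 2`.
-/

open Real Finset

lemma Hfun_eq_negMulLog (x : ℝ) : Hfun x = negMulLog x := by
  unfold Hfun negMulLog
  split_ifs with hx
  · simp [hx]
  · rw [one_div, log_inv]
    ring

lemma negMulLog_le_two_mul_sqrt {x : ℝ} (hx : 0 ≤ x) : negMulLog x ≤ 2 * √x := by
  have hsqrt : negMulLog x = 2 * √x * negMulLog √x := by
    rw [← mul_self_sqrt hx, negMulLog_mul, sqrt_mul_self (sqrt_nonneg x)]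
    ring
  have hle : negMulLog √x ≤ 1 := (negMulLog_le_one_sub_self (sqrt_nonneg x)).trans (by simp)
  rw [hsqrt]
  nlinarith [sqrt_nonneg x]

lemma negMulLog_le_four_mul_log_mul_add {x N : ℝ} (hx : 0 ≤ x) (hN : 1 ≤ N) :
    negMulLog x ≤ 4 * log N * x + 2 / N ^ 2 := by
  have hlogN : 0 ≤ log N := log_nonneg hN
  by_cases hsmall : √x ≤ (N ^ 2)⁻¹
  · calc negMulLog x ≤ 2 * √x := negMulLog_le_two_mul_sqrt hx
      _ ≤ 2 / N ^ 2 := by rw [div_eq_mul_inv]; gcongr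
      _ ≤ 4 * log N * x + 2 / N ^ 2 := le_add_of_nonneg_left (by positivity)
  · rw [not_le] at hsmall
    have hlog : -(2 * log N) < log x / 2 :=
      calc -(2 * log N) = log (N ^ 2)⁻¹ := by rw [log_inv, log_pow]; push_cast; ring
        _ < log √x := log_lt_log (by positivity) hsmall
        _ = log x / 2 := log_sqrt hx
    calc negMulLog x = x * -log x := by rw [negMulLog]; ring
      _ ≤ x * (4 * log N) := by gcongr; linarith
      _ ≤ 4 * log N * x + 2 / N ^ 2 := by
        rw [mul_comm x]
        exact le_add_of_nonneg_right (by positivity)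

lemma sum_Icc_inv_sq_le_two (m : ℕ) : ∑ n ∈ Icc 1 m, ((n : ℝ) ^ 2)⁻¹ ≤ 2 := by
  have hIcc : Icc 1 m = Ioo 0 (m + 1) := by ext; simp only [mem_Icc, mem_Ioo]; omega
  simpa [hIcc] using sum_Ioo_inv_sq_le (α := ℝ) 0 (m + 1)

theorem stmt2_general (a : ℕ → ℝ) (ha : ∀ n : ℕ, 1 ≤ n → 0 ≤ a n)
    (m : ℕ) :
    ∑ n ∈ Finset.Icc 1 m, Hfun (a n) ≤
      9 * ∑ n ∈ Finset.Icc 1 m, Real.log n * a n + 40 := by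
  have hterm : ∀ n ∈ Icc 1 m, Hfun (a n) ≤ 4 * (log n * a n) + 2 * ((n : ℝ) ^ 2)⁻¹ := by
    intro n hn
    have hn1 : 1 ≤ n := (mem_Icc.mp hn).1
    rw [Hfun_eq_negMulLog, ← mul_assoc, ← div_eq_mul_inv]
    exact negMulLog_le_four_mul_log_mul_add (ha n hn1) (by exact_mod_cast hn1)
  have hweighted : 0 ≤ ∑ n ∈ Icc 1 m, log n * a n :=
    sum_nonneg fun n hn => mul_nonneg (log_natCast_nonneg n) (ha n (mem_Icc.mp hn).1)
  calc ∑ n ∈ Icc 1 m, Hfun (a n)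
      ≤ ∑ n ∈ Icc 1 m, (4 * (log n * a n) + 2 * ((n : ℝ) ^ 2)⁻¹) := sum_le_sum hterm
    _ = 4 * ∑ n ∈ Icc 1 m, log n * a n + 2 * ∑ n ∈ Icc 1 m, ((n : ℝ) ^ 2)⁻¹ := by
      rw [sum_add_distrib, mul_sum, mul_sum]
    _ ≤ 9 * ∑ n ∈ Icc 1 m, log n * a n + 40 := by
      linarith [sum_Icc_inv_sq_le_two m]

theorem stmt2 (a : ℕ → ℝ) (ha : ∀ n : ℕ, 1 ≤ n → 0 ≤ a n)
    (hsum : ∀ m : ℕ, ∑ n ∈ Finset.Icc 1 m, a n ≤ 1)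
    (m : ℕ) (hm : 1 ≤ m) :
    ∑ n ∈ Finset.Icc 1 m, Hfun (a n) ≤
      9 * ∑ n ∈ Finset.Icc 1 m, Real.log n * a n + 40 :=
  stmt2_general a ha m
end

section
/- Let K ≥ 1, λ > 0, σ > 0 be real numbers and ℓ ≥ 1 an integer. Set n₀ = max{ ((ℓ−1)·log(K·e^σ)/λ)² , (2λ/min{λ,σ})² }. Then for every real n ≥ n₀ and every real m ≥ 0 one has (K·e^σ)^{ℓ−1} · e^{−λn−σm} ≤ e^{−λ·√(n+m)}. -/
theorem stmt6 (K lam sig : ℝ) (ℓ : ℕ) (hK : 1 ≤ K) (hlam : 0 < lam) (hsig : 0 < sig)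
    (hℓ : 1 ≤ ℓ) :
    ∀ n m : ℝ,
      max ((((ℓ : ℝ) - 1) * Real.log (K * Real.exp sig) / lam) ^ 2)
          ((2 * lam / min lam sig) ^ 2) ≤ n →
      0 ≤ m →
      (K * Real.exp sig) ^ (ℓ - 1) * Real.exp (-lam * n - sig * m) ≤
        Real.exp (-lam * Real.sqrt (n + m)) := by
  intro n m hn hm
  set C := K * Real.exp sig with hCdef
  have hexp1 : 1 ≤ Real.exp sig := Real.one_le_exp hsig.le
  have hC1 : 1 ≤ C := by
    have := Real.exp_pos sig
    nlinarith
  have hCpos : 0 < C := lt_of_lt_of_le one_pos hC1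
  have hlogC : 0 ≤ Real.log C := Real.log_nonneg hC1
  have hmin : 0 < min lam sig := lt_min hlam hsig
  set a : ℝ := ((ℓ : ℝ) - 1) * Real.log C with ha
  have hℓ1 : (1 : ℝ) ≤ (ℓ : ℝ) := by exact_mod_cast hℓ
  have ha0 : 0 ≤ a := mul_nonneg (by linarith) hlogC
  have hn1 : (a / lam) ^ 2 ≤ n := le_trans (le_max_left _ _) hn
  have hn2 : (2 * lam / min lam sig) ^ 2 ≤ n := le_trans (le_max_right _ _) hn
  have hn0 : 0 ≤ n := le_trans (sq_nonneg _) hn2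
  set s := Real.sqrt n with hs
  have hs0 : 0 ≤ s := Real.sqrt_nonneg n
  have hsn : s ^ 2 = n := Real.sq_sqrt hn0
  have hsa : a / lam ≤ s := by
    have h := Real.sqrt_le_sqrt hn1
    rwa [Real.sqrt_sq (by positivity : (0:ℝ) ≤ a / lam)] at h
  have hsb : 2 * lam / min lam sig ≤ s := by
    have h := Real.sqrt_le_sqrt hn2
    rwa [Real.sqrt_sq (by positivity : (0:ℝ) ≤ 2 * lam / min lam sig)] at h
  have hminlam : min lam sig ≤ lam := min_le_left _ _
  have hminsig : min lam sig ≤ sig := min_le_right _ _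
  have hs2 : 2 ≤ s := by
    have h2 : (2 : ℝ) ≤ 2 * lam / min lam sig := by
      rw [le_div_iff₀ hmin]; nlinarith
    linarith
  have hsp : 0 < s := by linarith
  have hls : lam ≤ 2 * s * sig := by
    have h := (div_le_iff₀ hmin).1 hsb
    nlinarith
  have hsa' : a ≤ lam * s := by
    have := (div_le_iff₀ hlam).1 hsa
    linarith
  -- key: sqrt (n+m) ≤ s + m/(2s)
  have hsqrt : Real.sqrt (n + m) ≤ s + m / (2 * s) := by
    have hrhs0 : 0 ≤ s + m / (2 * s) :=
      add_nonneg hs0 (div_nonneg hm (by linarith))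
    have h1 : n + m ≤ (s + m / (2 * s)) ^ 2 := by
      have hexp : (s + m / (2 * s)) ^ 2 = s ^ 2 + m + (m / (2 * s)) ^ 2 := by
        field_simp; ring
      nlinarith [sq_nonneg (m / (2 * s))]
    calc Real.sqrt (n + m) ≤ Real.sqrt ((s + m / (2 * s)) ^ 2) := Real.sqrt_le_sqrt h1
      _ = s + m / (2 * s) := Real.sqrt_sq hrhs0
  -- rewrite LHS as a single exponential
  have hcast : ((ℓ - 1 : ℕ) : ℝ) = (ℓ : ℝ) - 1 := by
    rw [Nat.cast_sub hℓ]; simp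
  have hLHS : C ^ (ℓ - 1) * Real.exp (-lam * n - sig * m)
      = Real.exp (a + (-lam * n - sig * m)) := by
    rw [Real.exp_add]
    congr 1
    rw [ha, ← hcast, ← Real.exp_log hCpos]
    rw [← Real.exp_nat_mul, Real.log_exp]
  rw [hLHS, Real.exp_le_exp]
  -- need: a - λn - σm ≤ -λ √(n+m)
  have hmdiv : lam * (m / (2 * s)) ≤ sig * m := by
    have h3 : lam / (2 * s) ≤ sig := by
      rw [div_le_iff₀ (by linarith : (0:ℝ) < 2 * s)]
      calc lam ≤ 2 * s * sig := hls
        _ = sig * (2 * s) := by ring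
    have : lam * (m / (2 * s)) = m * (lam / (2 * s)) := by ring
    rw [this]
    calc m * (lam / (2 * s)) ≤ m * sig := mul_le_mul_of_nonneg_left h3 hm
      _ = sig * m := mul_comm _ _
  have hmono : lam * Real.sqrt (n + m) ≤ lam * s + lam * (m / (2 * s)) := by
    calc lam * Real.sqrt (n + m) ≤ lam * (s + m / (2 * s)) :=
          mul_le_mul_of_nonneg_left hsqrt hlam.le
      _ = lam * s + lam * (m / (2 * s)) := by ring
  have h2s : 2 * s ≤ s * s := mul_le_mul_of_nonneg_right hs2 hs0
  have hns : 2 * (lam * s) ≤ lam * n := by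
    calc 2 * (lam * s) = lam * (2 * s) := by ring
      _ ≤ lam * (s * s) := mul_le_mul_of_nonneg_left h2s hlam.le
      _ = lam * n := by rw [← hsn]; ring
  linarith [hmono, hmdiv, hsa', hns]
end

section
/- Let X be a metric space, C ⊆ X a closed set with empty interior, and {X₁,…,X_t} a finite cover of X∖C by open subsets of X. If μ is a Borel probability measure on X with μ(C) = 0, then there exist open sets Y₁,…,Y_t such that Y_j ⊆ X_j for each j, Y₁ ∪ ⋯ ∪ Y_t = X∖C, and μ(∂Y_j) = 0 for every 1 ≤ j ≤ t, where ∂Y denotes the topological boundary (frontier) of Y in X. -/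
open MeasureTheory Set

/-!
Write each `Xⱼ` as the positivity set `{fⱼ > 0}` of a continuous function and let
`φ = maxⱼ fⱼ`, so that `C = {φ ≤ 0}`. For `0 ≤ r < 1` the open sets `Yⱼ = {r φ < fⱼ}` lie in `Xⱼ`
and cover `X ∖ C`, and off `C` the frontier of `Yⱼ` lies in the level set `{fⱼ / φ = r}`.
Only countably many level sets of the finitely many functions `fⱼ / φ` carry positive mass, so
some `r ∈ (0, 1)` makes all these frontiers null.
-/

theorem IsOpen.exists_continuousMap_eq_setOf_pos {X : Type*} [TopologicalSpace X]
    [PerfectlyNormalSpace X] {U : Set X} (hU : IsOpen U) : ∃ f : C(X, ℝ), U = {x | 0 < f x} := by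
  obtain ⟨f, hf, hf01⟩ :=
    perfectlyNormalSpace_iff_forall_isClosed_preimage_zero.1 ‹_› _ hU.isClosed_compl
  refine ⟨f, ext fun x => ?_⟩
  rw [← not_iff_not, ← mem_compl_iff, hf]
  simp [(hf01 x).1.lt_iff_ne']

theorem exists_mem_Ioo_forall_measure_setOf_eq_eq_zero {α ι : Type*} [MeasurableSpace α]
    [Countable ι] (μ : Measure α) [SFinite μ] {g : ι → α → ℝ} (hg : ∀ i, Measurable (g i))
    {a b : ℝ} (hab : a < b) : ∃ r ∈ Ioo a b, ∀ i, μ {x | g i x = r} = 0 := by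
  have hcount : (⋃ i, {r | 0 < μ {x | g i x = r}}).Countable :=
    countable_iUnion fun i => Measure.countable_meas_level_set_pos (hg i)
  obtain ⟨r, hr, hrB⟩ :=
    not_subset.1 fun h => (Cardinal.Real.Ioo_countable_iff.1 (hcount.mono h)).not_gt hab
  exact ⟨r, hr, by simpa [pos_iff_ne_zero] using hrB⟩

section sup'

variable {ι : Type*} [Fintype ι] [Nonempty ι] {a : ι → ℝ} {r : ℝ}

theorem sup'_pos_of_mul_sup'_lt (hr : r < 1) {i : ι}
    (h : r * Finset.univ.sup' Finset.univ_nonempty a < a i) :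
    0 < Finset.univ.sup' Finset.univ_nonempty a := by
  have := Finset.le_sup' a (Finset.mem_univ i)
  nlinarith

theorem pos_of_mul_sup'_lt (hr₀ : 0 ≤ r) (hr₁ : r < 1) {i : ι}
    (h : r * Finset.univ.sup' Finset.univ_nonempty a < a i) : 0 < a i :=
  (mul_nonneg hr₀ (sup'_pos_of_mul_sup'_lt hr₁ h).le).trans_lt h

theorem exists_mul_sup'_lt_iff (hr : r < 1) :
    (∃ i, r * Finset.univ.sup' Finset.univ_nonempty a < a i) ↔ ∃ i, 0 < a i := by
  refine ⟨fun ⟨i, h⟩ => ?_, fun ⟨i, h⟩ => ?_⟩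
  · exact (Finset.lt_sup'_iff _).1 (sup'_pos_of_mul_sup'_lt hr h) |>.imp fun _ ⟨_, h⟩ => h
  · obtain ⟨j, -, hj⟩ := Finset.exists_mem_eq_sup' Finset.univ_nonempty a
    have hpos : 0 < a j := hj ▸ h.trans_le (Finset.le_sup' a (Finset.mem_univ i))
    exact ⟨j, by rw [hj]; nlinarith⟩

end sup'

theorem measure_frontier_setOf_mul_lt_eq_zero {X : Type*} [TopologicalSpace X]
    [MeasurableSpace X] (μ : Measure X) {f φ : X → ℝ} (hf : Continuous f) (hφ : Continuous φ)
    {r : ℝ} (hr : μ {x | f x / φ x = r} = 0) (hφ₀ : μ {x | φ x ≤ 0} = 0) :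
    μ (frontier {x | r * φ x < f x}) = 0 := by
  refine measure_mono_null (fun x hx => ?_) (measure_union_null hr hφ₀)
  have hx : r * φ x = f x := frontier_lt_subset_eq (continuous_const.mul hφ) hf hx
  by_cases h : φ x ≤ 0
  · exact Or.inr h
  · left
    change f x / φ x = r
    rw [← hx, mul_div_cancel_right₀ _ (by linarith : φ x ≠ 0)]

theorem exists_isOpen_subset_iUnion_eq_measure_frontier_eq_zero {X ι : Type*}
    [TopologicalSpace X] [PerfectlyNormalSpace X] [MeasurableSpace X] [OpensMeasurableSpace X]
    [Finite ι] {U : ι → Set X} (hU : ∀ i, IsOpen (U i)) (μ : Measure X) [SFinite μ]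
    (hμ : μ (⋃ i, U i)ᶜ = 0) :
    ∃ V : ι → Set X, (∀ i, IsOpen (V i)) ∧ (∀ i, V i ⊆ U i) ∧ ⋃ i, V i = ⋃ i, U i ∧
      ∀ i, μ (frontier (V i)) = 0 := by
  cases isEmpty_or_nonempty ι
  · exact ⟨U, hU, fun _ => subset_rfl, rfl, isEmptyElim⟩
  cases nonempty_fintype ι
  choose f hf using fun i => (hU i).exists_continuousMap_eq_setOf_pos
  set φ : C(X, ℝ) := Finset.univ.sup' Finset.univ_nonempty f
  have hφ (x : X) : φ x = Finset.univ.sup' Finset.univ_nonempty (f · x) :=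
    ContinuousMap.sup'_apply _ _ _
  obtain ⟨r, ⟨hr₀, hr₁⟩, hr⟩ := exists_mem_Ioo_forall_measure_setOf_eq_eq_zero μ
    (g := fun i x => f i x / φ x) (fun i => (f i).measurable.div φ.measurable) zero_lt_one
  have hφ₀ : {x | φ x ≤ 0} = (⋃ i, U i)ᶜ := by
    ext x
    simp [hf, hφ]
  refine ⟨fun i => {x | r * φ x < f i x}, fun i => isOpen_lt (by fun_prop) (f i).continuous,
    fun i x hx => ?_, ?_, fun i => measure_frontier_setOf_mul_lt_eq_zero μ (f i).continuous
      φ.continuous (hr i) (hφ₀ ▸ hμ)⟩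
  · rw [hf i]
    exact pos_of_mul_sup'_lt hr₀.le hr₁ (a := (f · x)) (by rwa [← hφ])
  · ext x
    simp only [mem_iUnion, mem_ofPred_eq, hf, hφ]
    exact exists_mul_sup'_lt_iff hr₁

theorem stmt7_general {X : Type*} [MetricSpace X] [MeasurableSpace X] [BorelSpace X]
    (C : Set X)
    (t : ℕ) (Xs : Fin t → Set X) (hXopen : ∀ j, IsOpen (Xs j))
    (hXcover : (⋃ j, Xs j) = Cᶜ)
    (μ : Measure X) [IsProbabilityMeasure μ] (hμC : μ C = 0) :
    ∃ Ys : Fin t → Set X,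
      (∀ j, IsOpen (Ys j)) ∧ (∀ j, Ys j ⊆ Xs j) ∧
      (⋃ j, Ys j) = Cᶜ ∧ ∀ j, μ (frontier (Ys j)) = 0 := by
  rw [← compl_compl C, ← hXcover] at hμC
  obtain ⟨Ys, hYopen, hYsub, hYcover, hYfrontier⟩ :=
    exists_isOpen_subset_iUnion_eq_measure_frontier_eq_zero hXopen μ hμC
  exact ⟨Ys, hYopen, hYsub, hYcover.trans hXcover, hYfrontier⟩

theorem stmt7 {X : Type*} [MetricSpace X] [MeasurableSpace X] [BorelSpace X]
    (C : Set X) (hCcl : IsClosed C) (hCint : interior C = ∅)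
    (t : ℕ) (Xs : Fin t → Set X) (hXopen : ∀ j, IsOpen (Xs j))
    (hXcover : (⋃ j, Xs j) = Cᶜ)
    (μ : Measure X) [IsProbabilityMeasure μ] (hμC : μ C = 0) :
    ∃ Ys : Fin t → Set X,
      (∀ j, IsOpen (Ys j)) ∧ (∀ j, Ys j ⊆ Xs j) ∧
      (⋃ j, Ys j) = Cᶜ ∧ ∀ j, μ (frontier (Ys j)) = 0 :=
  stmt7_general C t Xs hXopen hXcover μ hμC
end

section
/- Suppose f : X∖C → X (as in the context) is strongly transitive. If the iterate f^ℓ is transitive for some integer ℓ ≥ 1, then f^ℓ is strongly transitive. -/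
open Set Function

variable {X : Type*} [MetricSpace X]

/-- `n`-step preimage of `A` under the partial map `g` (defined on `good`),
relative to the ambient set `W`: the first `n` iterates must avoid the
complement of `good` and stay in `W`. -/
def preImg (g : X → X) (good W : Set X) (n : ℕ) (A : Set X) : Set X :=
  {x | x ∈ W ∧ (∀ j < n, g^[j] x ∈ good ∩ W) ∧ g^[n] x ∈ A}

/-- The α-limit set `α_g(x) = ⋂_{n≥0} closure (⋃_{k≥0} g^{-k}(g^{-n}(x)))`. -/
def alphaLim (g : X → X) (good W : Set X) (x : X) : Set X :=
  ⋂ n : ℕ, closure (⋃ k : ℕ, preImg g good W k (preImg g good W n {x}))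

/-- `f*(U) = f(U ∖ C)`. -/
def fstar (f : X → X) (C : Set X) (U : Set X) : Set X := f '' (U \ C)

/-- The set of points whose orbit hits `C` within the first `ℓ` iterates,
i.e. the critical set of the partial map `f^ℓ`. -/
def critSet (f : X → X) (C : Set X) (ℓ : ℕ) : Set X := {x | ∃ j < ℓ, f^[j] x ∈ C}

/-- `g` (defined off the complement of `good`) is strongly transitive:
`α_g(x) = X` for every `x` in the domain. -/
def StronglyTransitiveMap (g : X → X) (good : Set X) : Prop :=
  ∀ x ∈ good, alphaLim g good Set.univ x = Set.univ

/-- `g` is transitive: `α_g(x) = X` for a dense set of points of the domain. -/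
def TransitiveMap (g : X → X) (good : Set X) : Prop :=
  Dense {x | x ∈ good ∧ alphaLim g good Set.univ x = Set.univ}

/-- `g` is transitive on the open set `W`: the α-limit set (in the whole space)
of each point of a dense subset of `W` contains the closure of `W`. -/
def TransitiveOnOpen (g : X → X) (good W : Set X) : Prop :=
  ∃ D : Set X, D ⊆ W ∧ W ⊆ closure D ∧ ∀ x ∈ D, closure W ⊆ alphaLim g good Set.univ x

/-- The restriction `g|_W` is strongly transitive: the α-limit set under the
restriction of every point of `W` is dense in `W`. -/
def StronglyTransitiveOnSet (g : X → X) (good W : Set X) : Prop :=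
  ∀ x ∈ W, W ⊆ closure (alphaLim g good W x)

section Aux

omit [MetricSpace X] in
lemma preImg_comp (g : X → X) (good : Set X) (k n : ℕ) (A : Set X) :
    preImg g good Set.univ k (preImg g good Set.univ n A) = preImg g good Set.univ (k + n) A := by
  ext w
  simp only [preImg, mem_setOf_eq, mem_univ, true_and, inter_univ]
  constructor
  · rintro ⟨h1, h2, h3⟩
    constructor
    · intro j hj
      rcases lt_or_ge j k with h | h
      · exact h1 j h
      · have hj' : j - k + k = j := by omega
        have : g^[j] w = g^[j - k] (g^[k] w) := by
          rw [← Function.iterate_add_apply, hj']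
        rw [this]; exact h2 (j - k) (by omega)
    · have : g^[k + n] w = g^[n] (g^[k] w) := by
        rw [← Function.iterate_add_apply, Nat.add_comm]
      rw [this]; exact h3
  · rintro ⟨h1, h2⟩
    refine ⟨fun j hj => h1 j (by omega), fun j hj => ?_, ?_⟩
    · rw [← Function.iterate_add_apply]; exact h1 (j + k) (by omega)
    · rw [← Function.iterate_add_apply, Nat.add_comm]; exact h2

omit [MetricSpace X] in
lemma preImg_iterate (f : X → X) (C : Set X) (ℓ : ℕ) (hℓ : 1 ≤ ℓ) (m : ℕ) (A : Set X) :
    preImg (f^[ℓ]) (critSet f C ℓ)ᶜ Set.univ m A = preImg f Cᶜ Set.univ (ℓ * m) A := by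
  ext w
  simp only [preImg, critSet, mem_setOf_eq, mem_univ, true_and, inter_univ, mem_compl_iff,
    ← Function.iterate_mul]
  constructor
  · rintro ⟨h1, h2⟩
    refine ⟨fun t ht => ?_, h2⟩
    have h := h1 (t / ℓ) (Nat.div_lt_of_lt_mul ht)
    intro hc
    apply h
    refine ⟨t % ℓ, Nat.mod_lt _ (by omega), ?_⟩
    rw [← Function.iterate_add_apply, Nat.mod_add_div]
    exact hc
  · rintro ⟨h1, h2⟩
    refine ⟨fun j hj => ?_, h2⟩
    rintro ⟨i, hi, hc⟩
    rw [← Function.iterate_add_apply] at hc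
    exact h1 (i + ℓ * j) (by calc i + ℓ * j < ℓ + ℓ * j := by omega
                               _ = ℓ * (j + 1) := by ring
                               _ ≤ ℓ * m := Nat.mul_le_mul_left _ (by omega)) hc

omit [MetricSpace X] in
lemma mem_preImg_single (f : X → X) (C : Set X) (z w : X) (q : ℕ) :
    w ∈ preImg f Cᶜ Set.univ q {z} ↔ (∀ j < q, f^[j] w ∉ C) ∧ f^[q] w = z := by
  simp [preImg]

def GoodOrb (f : X → X) (C : Set X) (q : ℕ) : Set X := {w | ∀ j < q, f^[j] w ∉ C}

omit [MetricSpace X] in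
lemma goodOrb_succ (f : X → X) (C : Set X) (q : ℕ) :
    GoodOrb f C (q + 1) = Cᶜ ∩ f ⁻¹' (GoodOrb f C q) := by
  ext w
  constructor
  · intro h
    refine ⟨h 0 (by omega), fun j hj => ?_⟩
    have := h (j + 1) (by omega)
    rwa [Function.iterate_succ_apply] at this
  · rintro ⟨h0, h1⟩ j hj
    match j with
    | 0 => exact h0
    | j + 1 => rw [Function.iterate_succ_apply]; exact h1 j (by omega)

lemma goodOrb_open {f : X → X} {C : Set X} (hCcl : IsClosed C)
    (hf : IsLocalHomeomorphOn f Cᶜ) : ∀ q, IsOpen (GoodOrb f C q) := by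
  intro q
  induction q with
  | zero =>
      have : GoodOrb f C 0 = Set.univ := by ext w; simp [GoodOrb]
      rw [this]; exact isOpen_univ
  | succ q ih =>
      rw [goodOrb_succ]
      rw [isOpen_iff_mem_nhds]
      rintro w ⟨hwC, hwf⟩
      exact Filter.inter_mem (hCcl.isOpen_compl.mem_nhds hwC)
        ((hf.continuousAt hwC).preimage_mem_nhds (ih.mem_nhds hwf))

lemma image_f_open {f : X → X} {C : Set X} (hf : IsLocalHomeomorphOn f Cᶜ)
    {W : Set X} (hW : IsOpen W) (hWC : W ⊆ Cᶜ) : IsOpen (f '' W) := by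
  rw [isOpen_iff_forall_mem_open]
  rintro _ ⟨w, hw, rfl⟩
  obtain ⟨e, hwe, heq⟩ := hf w (hWC hw)
  refine ⟨e '' (W ∩ e.source), ?_, ?_, ?_⟩
  · rintro _ ⟨u, ⟨huW, _⟩, rfl⟩
    exact ⟨u, huW, congrFun heq u⟩
  · exact e.isOpen_image_of_subset_source (hW.inter e.open_source) inter_subset_right
  · exact ⟨w, ⟨hw, hwe⟩, congrFun heq.symm w⟩

lemma image_iter_open {f : X → X} {C : Set X} (hCcl : IsClosed C)
    (hf : IsLocalHomeomorphOn f Cᶜ) :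
    ∀ (q : ℕ) (W : Set X), IsOpen W → W ⊆ GoodOrb f C q → IsOpen (f^[q] '' W) := by
  intro q
  induction q with
  | zero => intro W hW _; simpa using hW
  | succ q ih =>
      intro W hW hWG
      rw [Function.iterate_succ, Set.image_comp]
      have hWC : W ⊆ Cᶜ := fun w hw => (hWG hw) 0 (by omega)
      refine ih (f '' W) (image_f_open hf hW hWC) ?_
      rintro _ ⟨w, hw, rfl⟩ j hj
      have := hWG hw (j + 1) (by omega)
      rwa [Function.iterate_succ_apply] at this

omit [MetricSpace X] in
lemma pigeon_stab (ℓ : ℕ) (Q : ℕ → ℕ → Prop)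
    (mono : ∀ r i j, i ≤ j → Q r j → Q r i)
    (h : ∀ i, ∃ r, r < ℓ ∧ Q r i) : ∃ r, r < ℓ ∧ ∀ i, Q r i := by
  by_contra hcon
  push_neg at hcon
  have hch : ∀ r, ∃ i, r < ℓ → ¬ Q r i := by
    intro r
    by_cases hr : r < ℓ
    · obtain ⟨i, hi⟩ := hcon r hr
      exact ⟨i, fun _ => hi⟩
    · exact ⟨0, fun h' => absurd h' hr⟩
  choose g hg using hch
  obtain ⟨r, hr, hQ⟩ := h ((Finset.range ℓ).sup g)
  exact hg r hr (mono r (g r) _ (Finset.le_sup (Finset.mem_range.mpr hr)) hQ)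

/-- The set of residues `r` such that `x` has arbitrarily deep `f`-preimages
of depth `≡ r (mod ℓ)` with witness in `B`. -/
def Ares (f : X → X) (C : Set X) (ℓ : ℕ) (x : X) (r : ℕ) (B : Set X) : Prop :=
  ∀ N, ∃ q, N ≤ q ∧ q % ℓ = r ∧ (B ∩ preImg f Cᶜ Set.univ q {x}).Nonempty

omit [MetricSpace X] in
lemma Ares_mono {f : X → X} {C : Set X} {ℓ : ℕ} {x : X} {r : ℕ} {B B' : Set X}
    (hBB : B ⊆ B') (h : Ares f C ℓ x r B) : Ares f C ℓ x r B' := by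
  intro N
  obtain ⟨q, hq1, hq2, w, hw1, hw2⟩ := h N
  exact ⟨q, hq1, hq2, w, hBB hw1, hw2⟩

end Aux

theorem stmt9 [TopologicalSpace.SeparableSpace X] [BaireSpace X]
    (hballs : ∀ x : X, ∃ γ : ℝ, 0 < γ ∧ IsCompact (Metric.closedBall x γ) ∧
      ∀ ε : ℝ, 0 < ε → ε ≤ γ → IsConnected (Metric.ball x ε))
    (C : Set X) (hCcl : IsClosed C) (hCint : interior C = ∅)
    (f : X → X) (hf : IsLocalHomeomorphOn f Cᶜ)
    (hfib : ∀ x : X, {y | y ∉ C ∧ f y = x}.Finite)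
    (hst : StronglyTransitiveMap f Cᶜ)
    (ℓ : ℕ) (hℓ : 1 ≤ ℓ)
    (htrans : TransitiveMap (f^[ℓ]) (critSet f C ℓ)ᶜ) :
    StronglyTransitiveMap (f^[ℓ]) (critSet f C ℓ)ᶜ := by
  have hl0 : 0 < ℓ := hℓ
  intro x hx
  have hxC : x ∉ C := fun h => hx ⟨0, hl0, by simpa using h⟩
  unfold alphaLim
  rw [Set.iInter_eq_univ]
  intro n
  have key : ∀ k, preImg (f^[ℓ]) (critSet f C ℓ)ᶜ Set.univ k
      (preImg (f^[ℓ]) (critSet f C ℓ)ᶜ Set.univ n {x}) = preImg f Cᶜ Set.univ (ℓ * (k + n)) {x} :=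
    fun k => by rw [preImg_comp, preImg_iterate f C ℓ hℓ]
  rw [iUnion_congr key, ← dense_iff_closure_eq, dense_iff_inter_open]
  intro V hV hVne
  -- density of deep preimages of `x` (strong transitivity of `f`)
  have hdense_pre : ∀ (B : Set X), IsOpen B → B.Nonempty → ∀ N,
      ∃ q, N ≤ q ∧ (B ∩ preImg f Cᶜ Set.univ q {x}).Nonempty := by
    intro B hB hBne N
    have h := hst x hxC
    unfold alphaLim at h
    rw [Set.iInter_eq_univ] at h
    have hD : Dense (⋃ k, preImg f Cᶜ Set.univ (k + N) {x}) := by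
      rw [dense_iff_closure_eq,
        show (⋃ k, preImg f Cᶜ Set.univ (k + N) {x})
            = ⋃ k, preImg f Cᶜ Set.univ k (preImg f Cᶜ Set.univ N {x}) from
          (iUnion_congr fun k => preImg_comp f Cᶜ k N {x}).symm]
      exact h N
    obtain ⟨y, hyB, hy⟩ := (dense_iff_inter_open.mp hD) B hB hBne
    rw [mem_iUnion] at hy
    obtain ⟨k, hk⟩ := hy
    exact ⟨k + N, by omega, y, hyB, hk⟩
  -- the open dense set of points reachable from V in a multiple of ℓ steps
  set G := ⋃ k : ℕ, f^[ℓ * k] '' (V ∩ GoodOrb f C (ℓ * k)) with hGdef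
  have hGopen : IsOpen G :=
    isOpen_iUnion fun k => image_iter_open hCcl hf _ _ (hV.inter (goodOrb_open hCcl hf _))
      inter_subset_right
  have hGdense : Dense G := by
    refine Dense.mono ?_ htrans
    rintro d ⟨hdgood, hdal⟩
    unfold alphaLim at hdal
    rw [Set.iInter_eq_univ] at hdal
    have h0 := hdal 0
    have e0 : preImg (f^[ℓ]) (critSet f C ℓ)ᶜ Set.univ 0 {d} = {d} := by
      ext w; simp [preImg]
    rw [e0] at h0
    have hV' : (V ∩ ⋃ k, preImg f Cᶜ Set.univ (ℓ * k) {d}).Nonempty := by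
      rw [show (⋃ k, preImg f Cᶜ Set.univ (ℓ * k) {d})
          = ⋃ k, preImg (f^[ℓ]) (critSet f C ℓ)ᶜ Set.univ k {d} from
        iUnion_congr fun k => (preImg_iterate f C ℓ hℓ k {d}).symm]
      exact dense_iff_inter_open.mp (dense_iff_closure_eq.mpr h0) V hV hVne
    obtain ⟨v, hvV, hv⟩ := hV'
    rw [mem_iUnion] at hv
    obtain ⟨k, hk⟩ := hv
    rw [mem_preImg_single] at hk
    exact mem_iUnion.mpr ⟨k, v, ⟨hvV, hk.1⟩, hk.2⟩
  -- every nonempty open set realizes some residue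
  have hA_ne : ∀ B : Set X, IsOpen B → B.Nonempty → ∃ r, r < ℓ ∧ Ares f C ℓ x r B := by
    intro B hB hBne
    apply pigeon_stab ℓ
      (fun r N => ∃ q, N ≤ q ∧ q % ℓ = r ∧ (B ∩ preImg f Cᶜ Set.univ q {x}).Nonempty)
    · rintro r i j hij ⟨q, hq, rest⟩
      exact ⟨q, le_trans hij hq, rest⟩
    · intro N
      obtain ⟨q, hqN, hq⟩ := hdense_pre B hB hBne N
      exact ⟨q % ℓ, Nat.mod_lt _ hl0, q, hqN, rfl, hq⟩
  -- residue addition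
  have hadd : ∀ (B : Set X), IsOpen B → ∀ r r', Ares f C ℓ x r B →
      (∀ Ω, IsOpen Ω → x ∈ Ω → Ares f C ℓ x r' Ω) → Ares f C ℓ x ((r + r') % ℓ) B := by
    intro B hB r r' hr hr' N
    obtain ⟨q, hqN, hqr, w, hwB, hw⟩ := hr N
    rw [mem_preImg_single] at hw
    have hWopen : IsOpen (B ∩ GoodOrb f C q) := hB.inter (goodOrb_open hCcl hf q)
    have hwW : w ∈ B ∩ GoodOrb f C q := ⟨hwB, hw.1⟩
    have hΩ : IsOpen (f^[q] '' (B ∩ GoodOrb f C q)) :=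
      image_iter_open hCcl hf q _ hWopen inter_subset_right
    have hxΩ : x ∈ f^[q] '' (B ∩ GoodOrb f C q) := ⟨w, hwW, hw.2⟩
    obtain ⟨q', hq'N, hq'r, w', hw'Ω, hw'⟩ := hr' _ hΩ hxΩ N
    rw [mem_preImg_single] at hw'
    obtain ⟨b, hbW, hbw'⟩ := hw'Ω
    refine ⟨q + q', by omega, by rw [Nat.add_mod, hqr, hq'r], b, hbW.1, ?_⟩
    rw [mem_preImg_single]
    constructor
    · intro j hj
      rcases lt_or_ge j q with h | h
      · exact hbW.2 j h
      · have : f^[j] b = f^[j - q] (f^[q] b) := by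
          rw [← Function.iterate_add_apply]; congr 1; omega
        rw [this, hbw']
        exact hw'.1 (j - q) (by omega)
    · have : f^[q + q'] b = f^[q'] (f^[q] b) := by
        rw [← Function.iterate_add_apply]; congr 1; omega
      rw [this, hbw', hw'.2]
  -- a residue realized in G near x, at all scales
  obtain ⟨r₁, hr₁l, hr₁⟩ : ∃ r, r < ℓ ∧
      ∀ i : ℕ, Ares f C ℓ x r (Metric.ball x (1 / (i + 1 : ℝ)) ∩ G) := by
    apply pigeon_stab ℓ
    · intro r i j hij h
      refine Ares_mono (inter_subset_inter (Metric.ball_subset_ball ?_) (subset_refl G)) h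
      apply one_div_le_one_div_of_le
      · positivity
      · have : (i : ℝ) ≤ (j : ℝ) := Nat.cast_le.mpr hij
        linarith
    · intro i
      have hpos : (0 : ℝ) < 1 / (i + 1 : ℝ) := by positivity
      refine hA_ne _ (Metric.isOpen_ball.inter hGopen) ?_
      exact hGdense.inter_open_nonempty _ Metric.isOpen_ball ⟨x, Metric.mem_ball_self hpos⟩
  have hr₁S : ∀ Ω, IsOpen Ω → x ∈ Ω → Ares f C ℓ x r₁ Ω := by
    intro Ω hΩ hxΩ
    obtain ⟨ε, hε, hball⟩ := Metric.isOpen_iff.mp hΩ x hxΩ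
    obtain ⟨i, hi⟩ := exists_nat_one_div_lt hε
    refine Ares_mono ?_ (hr₁ i)
    exact inter_subset_left.trans ((Metric.ball_subset_ball hi.le).trans hball)
  have hr₁G : Ares f C ℓ x r₁ G := Ares_mono inter_subset_right (hr₁ 0)
  -- residue 0 is realized in G
  have hmul : ∀ k : ℕ, Ares f C ℓ x ((r₁ + k * r₁) % ℓ) G := by
    intro k
    induction k with
    | zero => simpa [Nat.mod_eq_of_lt hr₁l] using hr₁G
    | succ k ih =>
        have h2 := hadd G hGopen _ r₁ ih hr₁S
        have e : ((r₁ + k * r₁) % ℓ + r₁) % ℓ = (r₁ + (k + 1) * r₁) % ℓ := by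
          rw [Nat.mod_add_mod]; congr 1; ring
        rwa [e] at h2
  have hzero : Ares f C ℓ x 0 G := by
    have h := hmul (ℓ - 1)
    have e : r₁ + (ℓ - 1) * r₁ = ℓ * r₁ := by
      have : ℓ - 1 + 1 = ℓ := by omega
      calc r₁ + (ℓ - 1) * r₁ = (ℓ - 1 + 1) * r₁ := by ring
        _ = ℓ * r₁ := by rw [this]
    rwa [e, Nat.mul_mod_right] at h
  -- conclusion
  obtain ⟨q, hqN, hq0, w, hwG, hwPre⟩ := hzero (ℓ * (n + 1))
  rw [mem_preImg_single] at hwPre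
  rw [hGdef, mem_iUnion] at hwG
  obtain ⟨k, v, ⟨hvV, hvGood⟩, hfv⟩ := hwG
  obtain ⟨m, rfl⟩ := Nat.dvd_of_mod_eq_zero hq0
  have hmn : n + 1 ≤ m := Nat.le_of_mul_le_mul_left hqN hl0
  have hsum : ℓ * (k + m - n + n) = ℓ * m + ℓ * k := by
    have e1 : k + m - n + n = m + k := by omega
    rw [e1, Nat.mul_add]
  refine ⟨v, hvV, mem_iUnion.mpr ⟨k + m - n, ?_⟩⟩
  rw [mem_preImg_single]
  constructor
  · intro j hj
    rcases lt_or_ge j (ℓ * k) with h | h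
    · exact hvGood j h
    · have : f^[j] v = f^[j - ℓ * k] (f^[ℓ * k] v) := by
        rw [← Function.iterate_add_apply]; congr 1; omega
      rw [this, hfv]
      exact hwPre.1 (j - ℓ * k) (by rw [hsum] at hj; omega)
  · have : f^[ℓ * (k + m - n + n)] v = f^[ℓ * m] (f^[ℓ * k] v) := by
      rw [← Function.iterate_add_apply, ← hsum]
    rw [this, hfv, hwPre.2]
end

section
/- Suppose f : X∖C → X (as in the context) is strongly transitive and has a fixed point (Fix(f) ≠ ∅, where Fix(f) = {x ∈ X∖C : f(x) = x}). Then the iterate f^ℓ is strongly transitive for every integer ℓ ≥ 1. -/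
open Set Function

variable {X : Type*} [MetricSpace X]

open Topology Filter

section Preimages

variable {α : Type*} {g : α → α} {good : Set α}

lemma mem_preImg_univ {m : ℕ} {A : Set α} {w : α} :
    w ∈ preImg g good univ m A ↔ (∀ j < m, g^[j] w ∈ good) ∧ g^[m] w ∈ A := by
  simp [preImg]

lemma preImg_univ_preImg (k n : ℕ) (A : Set α) :
    preImg g good univ k (preImg g good univ n A) = preImg g good univ (k + n) A := by
  ext w
  simp only [mem_preImg_univ, ← iterate_add_apply, Nat.add_comm n]
  constructor
  · rintro ⟨hk, hn, hA⟩
    refine ⟨fun j hj => ?_, hA⟩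
    rcases lt_or_ge j k with hjk | hjk
    · exact hk j hjk
    · simpa [Nat.sub_add_cancel hjk] using hn (j - k) (by omega)
  · rintro ⟨hkn, hA⟩
    exact ⟨fun j hj => hkn j (by omega), fun j hj => hkn (j + k) (by omega), hA⟩

end Preimages

lemma mem_alphaLim_univ_iff {g : X → X} {good : Set X} {x b : X} :
    b ∈ alphaLim g good univ x ↔ ∀ n : ℕ, ∀ U ∈ 𝓝 b,
      ∃ w ∈ U, ∃ m, n ≤ m ∧ (∀ j < m, g^[j] w ∈ good) ∧ g^[m] w = x := by
  simp only [alphaLim, preImg_univ_preImg, mem_iInter, mem_closure_iff_nhds, inter_nonempty,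
    mem_iUnion, mem_preImg_univ, mem_singleton_iff]
  refine forall_congr' fun n => forall₂_congr fun U _ => ⟨?_, ?_⟩
  · rintro ⟨w, hwU, k, hw⟩
    exact ⟨w, hwU, k + n, le_add_self, hw⟩
  · rintro ⟨w, hwU, m, hnm, hw⟩
    exact ⟨w, hwU, m - n, by rwa [Nat.sub_add_cancel hnm]⟩

section CriticalSet

variable {α : Type*} {f : α → α} {C : Set α}

lemma notMem_critSet_iff {n : ℕ} {x : α} : x ∉ critSet f C n ↔ ∀ j < n, f^[j] x ∉ C := by
  simp [critSet]

lemma notMem_critSet_add {m n : ℕ} {x : α} :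
    x ∉ critSet f C (m + n) ↔ x ∉ critSet f C m ∧ f^[m] x ∉ critSet f C n := by
  simp only [notMem_critSet_iff, ← iterate_add_apply]
  constructor
  · intro h
    exact ⟨fun j hj => h j (by omega), fun j hj => by rw [Nat.add_comm]; exact h _ (by omega)⟩
  · rintro ⟨hm, hn⟩ j hj
    rcases lt_or_ge j m with hjm | hjm
    · exact hm j hjm
    · simpa [Nat.sub_add_cancel hjm] using hn (j - m) (by omega)

lemma notMem_critSet_succ {n : ℕ} {x : α} :
    x ∉ critSet f C (n + 1) ↔ x ∉ C ∧ f x ∉ critSet f C n := by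
  rw [Nat.add_comm, notMem_critSet_add]
  simp [critSet]

lemma notMem_critSet_mul {ℓ q : ℕ} {x : α} :
    x ∉ critSet f C (ℓ * q) ↔ ∀ j < q, (f^[ℓ])^[j] x ∉ critSet f C ℓ := by
  induction q with
  | zero => simp [critSet]
  | succ q ih =>
    rw [Nat.mul_succ, notMem_critSet_add, ih, iterate_mul, Nat.forall_lt_succ_right]

lemma Function.IsFixedPt.notMem_critSet {p : α} (hp : IsFixedPt f p) (hpC : p ∉ C) (n : ℕ) :
    p ∉ critSet f C n :=
  notMem_critSet_iff.2 fun j _ => by rwa [(hp.iterate j).eq]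

variable [TopologicalSpace α]

lemma isOpen_compl_critSet (hf : IsLocalHomeomorphOn f Cᶜ) (hC : IsClosed C) (n : ℕ) :
    IsOpen (critSet f C n)ᶜ := by
  induction n with
  | zero => simp [critSet]
  | succ n ih =>
    have h : (critSet f C (n + 1))ᶜ = Cᶜ ∩ f ⁻¹' (critSet f C n)ᶜ := by
      ext x; exact notMem_critSet_succ
    rw [h]
    exact hf.continuousOn.isOpen_inter_preimage hC.isOpen_compl ih

lemma isLocalHomeomorphOn_iterate (hf : IsLocalHomeomorphOn f Cᶜ) (n : ℕ) :
    IsLocalHomeomorphOn f^[n] (critSet f C n)ᶜ := by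
  induction n with
  | zero => exact (Homeomorph.refl α).isLocalHomeomorph.isLocalHomeomorphOn
  | succ n ih =>
    rw [iterate_succ]
    exact ih.comp (hf.mono fun x hx => (notMem_critSet_succ.1 hx).1)
      fun x hx => (notMem_critSet_succ.1 hx).2

lemma iterate_image_inter_compl_critSet_mem_nhds (hf : IsLocalHomeomorphOn f Cᶜ)
    (hC : IsClosed C) {n : ℕ} {z : α} (hz : z ∉ critSet f C n) {U : Set α}
    (hU : U ∈ 𝓝 z) :
    f^[n] '' (U ∩ (critSet f C n)ᶜ) ∈ 𝓝 (f^[n] z) := by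
  rw [← (isLocalHomeomorphOn_iterate hf n).map_nhds_eq hz]
  exact image_mem_map (inter_mem hU ((isOpen_compl_critSet hf hC n).mem_nhds hz))

end CriticalSet

lemma exists_lt_dvd_add {ℓ : ℕ} (hℓ : 0 < ℓ) (a : ℕ) : ∃ k < ℓ, ℓ ∣ a + k := by
  refine ⟨(ℓ - a % ℓ) % ℓ, Nat.mod_lt _ hℓ, Nat.dvd_of_mod_eq_zero ?_⟩
  rw [Nat.add_mod_mod, ← Nat.mod_add_mod, Nat.add_sub_cancel' (Nat.mod_lt a hℓ).le,
    Nat.mod_self]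

section StrongTransitivity

variable {f : X → X} {C : Set X}

lemma StronglyTransitiveMap.exists_iterate_eq (hst : StronglyTransitiveMap f Cᶜ) {x : X}
    (hx : x ∉ C) (n : ℕ) {b : X} {U : Set X} (hU : U ∈ 𝓝 b) :
    ∃ w ∈ U, ∃ m, n ≤ m ∧ w ∉ critSet f C m ∧ f^[m] w = x := by
  have hb : b ∈ alphaLim f Cᶜ univ x := by rw [hst x hx]; exact mem_univ b
  simpa only [notMem_critSet_iff, mem_compl_iff] using mem_alphaLim_univ_iff.1 hb n U hU

/-- Pull `x` back to a point `w` near the fixed point `p`, then pull `w` back into `U` along an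
orbit that reaches `p` and stays there for `k < ℓ` steps, with `k` chosen to make the total time
divisible by `ℓ`. The `ℓ` possible values of `k` are handled at once because each `f^[u + k]`
maps neighbourhoods of a point onto neighbourhoods of `p`. -/
lemma StronglyTransitiveMap.exists_iterate_mul_eq (hst : StronglyTransitiveMap f Cᶜ)
    (hC : IsClosed C) (hf : IsLocalHomeomorphOn f Cᶜ) {p : X} (hpC : p ∉ C)
    (hp : IsFixedPt f p) {ℓ : ℕ} (hℓ : 0 < ℓ) {x : X} (hx : x ∉ C) (N : ℕ) {b : X}
    {U : Set X} (hU : U ∈ 𝓝 b) :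
    ∃ z ∈ U, ∃ q, N ≤ q ∧ z ∉ critSet f C (ℓ * q) ∧ f^[ℓ * q] z = x := by
  obtain ⟨z, hzU, u, -, hz, hzp⟩ := hst.exists_iterate_eq hpC 0 (interior_mem_nhds.2 hU)
  have hV : ∀ᶠ w in 𝓝 p, ∀ k ∈ Finset.range ℓ,
      w ∈ f^[u + k] '' (interior U ∩ (critSet f C (u + k))ᶜ) := by
    refine (Finset.range ℓ).eventually_all.2 fun k _ => ?_
    have hzk : z ∉ critSet f C (u + k) :=
      notMem_critSet_add.2 ⟨hz, hzp ▸ hp.notMem_critSet hpC k⟩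
    have hzkp : f^[u + k] z = p := by rw [add_comm, iterate_add_apply, hzp, (hp.iterate k).eq]
    exact hzkp ▸
      iterate_image_inter_compl_critSet_mem_nhds hf hC hzk (isOpen_interior.mem_nhds hzU)
  obtain ⟨w, hwV, t, hNt, hw, hwx⟩ := hst.exists_iterate_eq hx (ℓ * N) hV
  obtain ⟨k, hkℓ, q, hq⟩ := exists_lt_dvd_add hℓ (u + t)
  obtain ⟨z', ⟨hz'U, hz'⟩, hz'w⟩ := hwV k (Finset.mem_range.2 hkℓ)
  have htime : u + k + t = ℓ * q := by rw [← hq]; ring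
  refine ⟨z', interior_subset hz'U, q, ?_, ?_, ?_⟩
  · exact Nat.le_of_mul_le_mul_left (by omega) hℓ
  · rw [← htime]
    exact notMem_critSet_add.2 ⟨hz', hz'w ▸ hw⟩
  · rw [← htime, add_comm, iterate_add_apply, hz'w, hwx]

end StrongTransitivity

theorem stmt10_general
    (C : Set X) (hCcl : IsClosed C)
    (f : X → X) (hf : IsLocalHomeomorphOn f Cᶜ)
    (hst : StronglyTransitiveMap f Cᶜ)
    (hfix : ∃ p : X, p ∉ C ∧ f p = p) :
    ∀ ℓ : ℕ, 1 ≤ ℓ → StronglyTransitiveMap (f^[ℓ]) (critSet f C ℓ)ᶜ := by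
  intro ℓ hℓ x hx
  obtain ⟨p, hpC, hp⟩ := hfix
  refine eq_univ_of_forall fun b => mem_alphaLim_univ_iff.2 fun n U hU => ?_
  obtain ⟨z, hzU, q, hnq, hz, hzx⟩ :=
    hst.exists_iterate_mul_eq hCcl hf hpC hp hℓ (fun h => hx ⟨0, hℓ, h⟩) n hU
  exact ⟨z, hzU, q, hnq, notMem_critSet_mul.1 hz, by rwa [← iterate_mul]⟩

theorem stmt10 [TopologicalSpace.SeparableSpace X] [BaireSpace X]
    (hballs : ∀ x : X, ∃ γ : ℝ, 0 < γ ∧ IsCompact (Metric.closedBall x γ) ∧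
      ∀ ε : ℝ, 0 < ε → ε ≤ γ → IsConnected (Metric.ball x ε))
    (C : Set X) (hCcl : IsClosed C) (hCint : interior C = ∅)
    (f : X → X) (hf : IsLocalHomeomorphOn f Cᶜ)
    (hfib : ∀ x : X, {y | y ∉ C ∧ f y = x}.Finite)
    (hst : StronglyTransitiveMap f Cᶜ)
    (hfix : ∃ p : X, p ∉ C ∧ f p = p) :
    ∀ ℓ : ℕ, 1 ≤ ℓ → StronglyTransitiveMap (f^[ℓ]) (critSet f C ℓ)ᶜ :=
  stmt10_general C hCcl f hf hst hfix
end

section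
/- Let f : X → X be measurable, μ an f-invariant ergodic Borel probability measure on X, and F : A → B an induced map, F(x) = f^{R(x)}(x) with measurable inducing time R : A → ℕ (R ≥ 1). Suppose ν is an F-invariant probability measure with ν ≪ μ, ν is ergodic for F, and ∫ R dν < +∞. If φ : X → ℝ is measurable and μ-integrable and φ̄ : A → ℝ is its F-lift, φ̄(x) = Σ_{j=0}^{R(x)−1} φ(f^j(x)), then ∫ φ dμ = (∫ φ̄ dν) / (∫ R dν). -/
/-!
Spread `ν` over the Kakutani tower of the induced map `F = f^[R]`: the measure
`m = ∑ⱼ (f^[j])₊ (ν|{j < R})` satisfies `∫ g ∂m = ∫ (∑_{j < R x} g (f^[j] x)) ∂ν`. Hence `m` has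
total mass `∫ R ∂ν < ∞` and `m ≪ μ`, and `m` is `f`-invariant because the lifts telescope,
`(g ∘ f)‾ + g = ḡ + g ∘ F`, while `ν` is `F`-invariant. Ergodicity of `μ` then forces
`m = (∫ R ∂ν) • μ`, and integrating `φ` against `m` gives the formula.
-/

open MeasureTheory Set
open scoped ENNReal

lemma tsum_indicator_iterate_eq_birkhoffSum {X M : Type*} [AddCommMonoid M] [TopologicalSpace M]
    (f : X → X) (R : X → ℕ) (g : X → M) (x : X) :
    ∑' j, {y | j < R y}.indicator (fun y => g (f^[j] y)) x = birkhoffSum f g (R x) x := by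
  rw [birkhoffSum, tsum_eq_sum (s := Finset.range (R x))]
  · exact Finset.sum_congr rfl fun j hj =>
      Set.indicator_of_mem (s := {y | j < R y}) (Finset.mem_range.1 hj) _
  · exact fun j hj => Set.indicator_of_notMem (s := {y | j < R y}) (by simpa using hj) _

lemma birkhoffSum_comp_add {X M : Type*} [AddCommMonoid M] (f : X → X) (g : X → M) (n : ℕ)
    (x : X) : birkhoffSum f (g ∘ f) n x + g x = birkhoffSum f g n x + g (f^[n] x) := by
  rw [← birkhoffSum_succ, birkhoffSum_succ', add_comm]
  simp only [birkhoffSum, Function.comp_apply, ← Function.iterate_succ_apply' f,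
    Function.iterate_succ_apply]

section Tower

noncomputable def towerMeasure {X : Type*} [MeasurableSpace X] (f : X → X) (R : X → ℕ)
    (ν : Measure X) : Measure X :=
  Measure.sum fun j => (ν.restrict {x | j < R x}).map f^[j]

variable {X : Type*} [MeasurableSpace X] {f : X → X} {R : X → ℕ} {ν : Measure X}

lemma towerMeasure_absolutelyContinuous {μ : Measure X} (hf : MeasurePreserving f μ μ)
    (hν : ν ≪ μ) : towerMeasure f R ν ≪ μ :=
  Measure.absolutelyContinuous_sum_left fun j =>
    (hf.iterate j).map_eq ▸ (Measure.restrict_le_self.absolutelyContinuous.trans hν).map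
      (hf.measurable.iterate j)

variable (hf : Measurable f) (hR : Measurable R)
include hf hR

lemma lintegral_towerMeasure {g : X → ℝ≥0∞} (hg : AEMeasurable g (towerMeasure f R ν)) :
    ∫⁻ x, g x ∂towerMeasure f R ν = ∫⁻ x, birkhoffSum f g (R x) x ∂ν := by
  have hU (j : ℕ) : MeasurableSet {x | j < R x} := measurableSet_lt measurable_const hR
  have hgj (j : ℕ) : AEMeasurable (fun x => g (f^[j] x)) (ν.restrict {x | j < R x}) :=
    (hg.mono_measure (Measure.le_sum _ j)).comp_aemeasurable (hf.iterate j).aemeasurable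
  simp_rw [← tsum_indicator_iterate_eq_birkhoffSum]
  rw [towerMeasure, lintegral_sum_measure,
    lintegral_tsum fun j => (aemeasurable_indicator_iff (hU j)).2 (hgj j)]
  refine tsum_congr fun j => ?_
  rw [lintegral_map' (hg.mono_measure (Measure.le_sum _ j)) (hf.iterate j).aemeasurable,
    lintegral_indicator (hU j)]

lemma towerMeasure_univ : towerMeasure f R ν univ = ∫⁻ x, R x ∂ν := by
  rw [← lintegral_one, lintegral_towerMeasure hf hR aemeasurable_const]
  simp [birkhoffSum]

lemma integral_towerMeasure {E : Type*} [NormedAddCommGroup E] [NormedSpace ℝ E] {φ : X → E}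
    (hφ : Integrable φ (towerMeasure f R ν)) :
    ∫ x, φ x ∂towerMeasure f R ν = ∫ x, birkhoffSum f φ (R x) x ∂ν := by
  have hU (j : ℕ) : MeasurableSet {x | j < R x} := measurableSet_lt measurable_const hR
  have hφj (j : ℕ) := hφ.1.mono_measure (Measure.le_sum _ j)
  have hψ (j : ℕ) : AEStronglyMeasurable ({x | j < R x}.indicator fun x => φ (f^[j] x)) ν :=
    (aestronglyMeasurable_indicator_iff (hU j)).2
      ((hφj j).comp_aemeasurable (hf.iterate j).aemeasurable)
  have hfin : ∑' j, ∫⁻ x, ‖{x | j < R x}.indicator (fun x => φ (f^[j] x)) x‖ₑ ∂ν ≠ ∞ := by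
    rw [← lintegral_tsum fun j => (hψ j).enorm]
    simp_rw [enorm_indicator_eq_indicator_enorm, tsum_indicator_iterate_eq_birkhoffSum f R
      (fun x => ‖φ x‖ₑ), ← lintegral_towerMeasure hf hR hφ.1.enorm]
    exact hφ.2.ne
  simp_rw [← tsum_indicator_iterate_eq_birkhoffSum]
  rw [integral_tsum hψ hfin, towerMeasure, integral_sum_measure hφ]
  refine tsum_congr fun j => ?_
  rw [integral_map (hf.iterate j).aemeasurable (hφj j), integral_indicator (hU j)]

lemma lintegral_comp_towerMeasure_add {g : X → ℝ≥0∞} (hg : Measurable g)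
    (hF : MeasurePreserving (fun x => f^[R x] x) ν ν) :
    ∫⁻ x, g (f x) ∂towerMeasure f R ν + ∫⁻ x, g x ∂ν =
      ∫⁻ x, g x ∂towerMeasure f R ν + ∫⁻ x, g x ∂ν := by
  calc ∫⁻ x, g (f x) ∂towerMeasure f R ν + ∫⁻ x, g x ∂ν
      = ∫⁻ x, (birkhoffSum f (g ∘ f) (R x) x + g x) ∂ν := by
        rw [lintegral_add_right _ hg,
          ← lintegral_towerMeasure (g := g ∘ f) hf hR (hg.comp hf).aemeasurable]
        rfl
    _ = ∫⁻ x, (birkhoffSum f g (R x) x + g (f^[R x] x)) ∂ν := by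
        simp_rw [birkhoffSum_comp_add]
    _ = ∫⁻ x, g x ∂towerMeasure f R ν + ∫⁻ x, g x ∂ν := by
        have hgF : Measurable fun x => g (f^[R x] x) := hg.comp hF.measurable
        rw [lintegral_add_right _ hgF, hF.lintegral_comp hg,
          lintegral_towerMeasure hf hR hg.aemeasurable]

lemma measurePreserving_towerMeasure [IsFiniteMeasure ν]
    (hF : MeasurePreserving (fun x => f^[R x] x) ν ν) :
    MeasurePreserving f (towerMeasure f R ν) (towerMeasure f R ν) := by
  refine ⟨hf, Measure.ext fun S hS => ?_⟩
  have h := lintegral_comp_towerMeasure_add hf hR (measurable_one.indicator hS) hF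
  simp only [← indicator_comp_right, Pi.one_comp, lintegral_indicator_one hS,
    lintegral_indicator_one (hf hS)] at h
  rw [Measure.map_apply hf hS]
  exact (ENNReal.add_left_inj (measure_ne_top ν S)).1 h

end Tower

lemma Ergodic.towerMeasure_eq_smul {X : Type*} [MeasurableSpace X] {f : X → X} {R : X → ℕ}
    {μ ν : Measure X} [IsProbabilityMeasure μ] [IsFiniteMeasure ν] (herg : Ergodic f μ)
    (hR : Measurable R) (hF : MeasurePreserving (fun x => f^[R x] x) ν ν) (hν : ν ≪ μ)
    (hRfin : ∫⁻ x, (R x : ℝ≥0∞) ∂ν ≠ ∞) :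
    towerMeasure f R ν = (∫⁻ x, (R x : ℝ≥0∞) ∂ν) • μ := by
  have hf := herg.measurable
  have : IsFiniteMeasure (towerMeasure f R ν) :=
    ⟨(towerMeasure_univ hf hR).trans_lt hRfin.lt_top⟩
  obtain ⟨c, hc⟩ := herg.eq_smul_of_absolutelyContinuous (measurePreserving_towerMeasure hf hR hF)
    (towerMeasure_absolutelyContinuous herg.toMeasurePreserving hν)
  have hc_eq : c = ∫⁻ x, (R x : ℝ≥0∞) ∂ν := by
    simpa [hc] using towerMeasure_univ hf hR (ν := ν)
  rw [hc, hc_eq]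

theorem stmt13_general {X : Type*} [MeasurableSpace X]
    (f : X → X)
    (μ : Measure X) [IsProbabilityMeasure μ]
    (herg : Ergodic f μ)
    (A : Set X)
    (R : X → ℕ) (hRm : Measurable R) (hR1 : ∀ x ∈ A, 1 ≤ R x)
    (ν : Measure X) [IsProbabilityMeasure ν]
    (hνA : ν Aᶜ = 0) (hac : ν ≪ μ)
    (hFinv : MeasurePreserving (fun x => f^[R x] x) ν ν)
    (hRint : Integrable (fun x => (R x : ℝ)) ν)
    (φ : X → ℝ) (hφint : Integrable φ μ) :
    ∫ x, φ x ∂μ =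
      (∫ x, (∑ j ∈ Finset.range (R x), φ (f^[j] x)) ∂ν) / (∫ x, (R x : ℝ) ∂ν) := by
  have hR1ae : ∀ᵐ x ∂ν, 1 ≤ R x := measure_mono_null (fun x hx hxA => hx (hR1 x hxA)) hνA
  have hRfin : ∫⁻ x, (R x : ℝ≥0∞) ∂ν ≠ ∞ := by simpa using hRint.lintegral_lt_top.ne
  set c := ∫⁻ x, (R x : ℝ≥0∞) ∂ν
  have hm := herg.towerMeasure_eq_smul hRm hFinv hac hRfin
  have hc_one : 1 ≤ c :=
    calc (1 : ℝ≥0∞) = ∫⁻ _, 1 ∂ν := by simp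
      _ ≤ c := lintegral_mono_ae (hR1ae.mono fun x hx => Nat.one_le_cast.2 hx)
  have hden : ∫ x, (R x : ℝ) ∂ν = c.toReal := by
    simpa using integral_toReal (measurable_from_nat.comp hRm).aemeasurable
      (ae_of_all _ fun x => ENNReal.natCast_lt_top (R x))
  have hnum : ∫ x, birkhoffSum f φ (R x) x ∂ν = c.toReal * ∫ x, φ x ∂μ := by
    rw [← integral_towerMeasure herg.measurable hRm (hm ▸ hφint.smul_measure hRfin), hm,
      integral_smul_measure, smul_eq_mul]
  show _ = (∫ x, birkhoffSum f φ (R x) x ∂ν) / _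
  have hc_pos : 0 < c.toReal := ENNReal.toReal_pos (zero_lt_one.trans_le hc_one).ne' hRfin
  rw [hnum, hden, mul_div_cancel_left₀ _ hc_pos.ne']

theorem stmt13 {X : Type*} [MeasurableSpace X]
    (f : X → X) (hfm : Measurable f)
    (μ : Measure X) [IsProbabilityMeasure μ]
    (hfμ : MeasurePreserving f μ μ) (herg : Ergodic f μ)
    (A B : Set X) (hA : MeasurableSet A) (hB : MeasurableSet B)
    (R : X → ℕ) (hRm : Measurable R) (hR1 : ∀ x ∈ A, 1 ≤ R x)
    (hmaps : Set.MapsTo (fun x => f^[R x] x) A B)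
    (ν : Measure X) [IsProbabilityMeasure ν]
    (hνA : ν Aᶜ = 0) (hac : ν ≪ μ)
    (hFinv : MeasurePreserving (fun x => f^[R x] x) ν ν)
    (hFerg : Ergodic (fun x => f^[R x] x) ν)
    (hRint : Integrable (fun x => (R x : ℝ)) ν)
    (φ : X → ℝ) (hφm : Measurable φ) (hφint : Integrable φ μ) :
    ∫ x, φ x ∂μ =
      (∫ x, (∑ j ∈ Finset.range (R x), φ (f^[j] x)) ∂ν) / (∫ x, (R x : ℝ) ∂ν) :=
  stmt13_general f μ herg A R hRm hR1 ν hνA hac hFinv hRint φ hφint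
end

section
/- Let N ⊆ {1,2,3,…} be nonempty and let c : N → {1,2,3,…} assign to each n ∈ N a positive integer c_n. Suppose 𝐜 ≥ 0 is a real number such that for every finitely supported family (a_n)_{n∈N} of nonnegative reals with Σ_{n∈N} a_n = 1 one has Σ_{n∈N, a_n>0} a_n·log(c_n/a_n) ≤ 𝐜·Σ_{n∈N} n·a_n. Then Σ_{n∈N} c_n·e^{−𝐜·n} ≤ 1. -/
/-!
Test the entropy inequality on the Gibbs distribution `a n ∝ c n * exp (-β n)` on a finite
set `s ⊆ N`. Writing `Z` for its normalising constant, `log (c n / a n) = log Z + β n`, so the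
inequality reads `log Z + β · mean ≤ β · mean`, i.e. `Z ≤ 1`. Every finite partial sum of the
series is such a `Z`, hence the series converges with sum at most `1`.
-/

open Real Finset

namespace Gibbs

variable {s : Finset ℕ} {c : ℕ → ℝ} {β : ℝ}

noncomputable def dist (s : Finset ℕ) (c : ℕ → ℝ) (β : ℝ) (n : ℕ) : ℝ :=
  if n ∈ s then c n * exp (-β * n) / ∑ m ∈ s, c m * exp (-β * m) else 0

lemma partitionFn_pos (hc : ∀ n ∈ s, 0 < c n) (hs : s.Nonempty) :
    0 < ∑ m ∈ s, c m * exp (-β * m) :=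
  sum_pos (fun n hn => mul_pos (hc n hn) (exp_pos _)) hs

lemma dist_pos (hc : ∀ n ∈ s, 0 < c n) {n : ℕ} (hn : n ∈ s) : 0 < dist s c β n := by
  rw [dist, if_pos hn]
  exact div_pos (mul_pos (hc n hn) (exp_pos _)) (partitionFn_pos hc ⟨n, hn⟩)

lemma dist_nonneg (hc : ∀ n ∈ s, 0 < c n) (n : ℕ) : 0 ≤ dist s c β n := by
  by_cases hn : n ∈ s
  · exact (dist_pos hc hn).le
  · simp [dist, hn]

lemma dist_of_notMem {n : ℕ} (hn : n ∉ s) : dist s c β n = 0 := by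
  simp [dist, hn]

lemma sum_dist (hc : ∀ n ∈ s, 0 < c n) (hs : s.Nonempty) : ∑ n ∈ s, dist s c β n = 1 := by
  unfold dist
  rw [sum_ite_of_true fun _ hn => hn, ← sum_div, div_self (partitionFn_pos hc hs).ne']

lemma log_div_dist (hc : ∀ n ∈ s, 0 < c n) {n : ℕ} (hn : n ∈ s) :
    log (c n / dist s c β n) = log (∑ m ∈ s, c m * exp (-β * m)) + β * n := by
  have hZ := partitionFn_pos (β := β) hc ⟨n, hn⟩
  have hratio : c n / dist s c β n = (∑ m ∈ s, c m * exp (-β * m)) * exp (β * n) := by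
    rw [dist, if_pos hn, neg_mul, exp_neg]
    field_simp [(hc n hn).ne']
  rw [hratio, log_mul hZ.ne' (exp_pos _).ne', log_exp]

lemma entropy_dist (hc : ∀ n ∈ s, 0 < c n) (hs : s.Nonempty) :
    ∑ n ∈ s, (if 0 < dist s c β n then dist s c β n * log (c n / dist s c β n) else 0) =
      log (∑ m ∈ s, c m * exp (-β * m)) + β * ∑ n ∈ s, (n : ℝ) * dist s c β n := by
  have hterm : ∀ n ∈ s,
      (if 0 < dist s c β n then dist s c β n * log (c n / dist s c β n) else 0) =
        dist s c β n * log (∑ m ∈ s, c m * exp (-β * m)) + β * (n * dist s c β n) := by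
    intro n hn
    rw [if_pos (dist_pos hc hn), log_div_dist hc hn]
    ring
  rw [sum_congr rfl hterm, sum_add_distrib, ← sum_mul, sum_dist hc hs, one_mul, mul_sum]

end Gibbs

open Gibbs in
lemma sum_mul_exp_neg_le_one_of_entropy_le {s : Finset ℕ} {c : ℕ → ℝ} {β : ℝ}
    (hc : ∀ n ∈ s, 0 < c n)
    (hent : ∀ a : ℕ → ℝ, (∀ n, 0 ≤ a n) → (∀ n, n ∉ s → a n = 0) → ∑ n ∈ s, a n = 1 →
      ∑ n ∈ s, (if 0 < a n then a n * log (c n / a n) else 0) ≤ β * ∑ n ∈ s, (n : ℝ) * a n) :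
    ∑ n ∈ s, c n * exp (-β * n) ≤ 1 := by
  rcases s.eq_empty_or_nonempty with rfl | hs
  · simp
  have h := hent (dist s c β) (dist_nonneg hc) (fun _ => dist_of_notMem) (sum_dist hc hs)
  rw [entropy_dist hc hs] at h
  exact (log_nonpos_iff (partitionFn_pos hc hs).le).mp (by linarith)

theorem stmt19_general (N : Set ℕ)
    (c : ℕ → ℕ) (hc : ∀ n ∈ N, 1 ≤ c n)
    (c0 : ℝ)
    (hmain : ∀ s : Finset ℕ, ↑s ⊆ N → ∀ a : ℕ → ℝ, (∀ n, 0 ≤ a n) →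
      (∀ n, n ∉ s → a n = 0) → ∑ n ∈ s, a n = 1 →
      ∑ n ∈ s, (if 0 < a n then a n * Real.log ((c n : ℝ) / a n) else 0) ≤
        c0 * ∑ n ∈ s, (n : ℝ) * a n) :
    Summable (fun n : ℕ => Set.indicator N (fun n => (c n : ℝ) * Real.exp (-c0 * n)) n) ∧
    ∑' n : ℕ, Set.indicator N (fun n => (c n : ℝ) * Real.exp (-c0 * n)) n ≤ 1 := by
  classical
  set f := Set.indicator N (fun n => (c n : ℝ) * Real.exp (-c0 * n))
  have hf0 : 0 ≤ f := fun n => Set.indicator_nonneg (fun _ _ => by positivity) n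
  have hpartial : ∀ t : Finset ℕ, ∑ n ∈ t, f n ≤ 1 := by
    intro t
    have htN : ↑(t.filter (· ∈ N)) ⊆ N := fun n hn => (mem_filter.mp hn).2
    rw [sum_indicator_eq_sum_filter]
    refine sum_mul_exp_neg_le_one_of_entropy_le (fun n hn => ?_) (hmain _ htN)
    exact_mod_cast hc n (htN hn)
  have hsum : Summable f := summable_of_sum_le hf0 hpartial
  exact ⟨hsum, hsum.tsum_le_of_sum_le hpartial⟩

theorem stmt19 (N : Set ℕ) (hNne : N.Nonempty) (hN1 : ∀ n ∈ N, 1 ≤ n)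
    (c : ℕ → ℕ) (hc : ∀ n ∈ N, 1 ≤ c n)
    (c0 : ℝ) (hc0 : 0 ≤ c0)
    (hmain : ∀ s : Finset ℕ, ↑s ⊆ N → ∀ a : ℕ → ℝ, (∀ n, 0 ≤ a n) →
      (∀ n, n ∉ s → a n = 0) → ∑ n ∈ s, a n = 1 →
      ∑ n ∈ s, (if 0 < a n then a n * Real.log ((c n : ℝ) / a n) else 0) ≤
        c0 * ∑ n ∈ s, (n : ℝ) * a n) :
    Summable (fun n : ℕ => Set.indicator N (fun n => (c n : ℝ) * Real.exp (-c0 * n)) n) ∧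
    ∑' n : ℕ, Set.indicator N (fun n => (c n : ℝ) * Real.exp (-c0 * n)) n ≤ 1 :=
  stmt19_general N c hc c0 hmain
end
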